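/- arXiv:2109.13133 — 3 statements merged into one kernel-verified Lean document; each statement's English description precedes it below -/
import Mathlib

section
/- Let n ≥ 2 and let M be the free metabelian group of rank n, with commutator subgroup M'. Then an element x ∈ M commutes with [y, z] for all y, z ∈ M if and only if x ∈ M'. Equivalently, the centralizer of the commutator subgroup M' in M is exactly M'. -/
/-- The free metabelian group of rank `n`: the quotient of the free group on `n`
generators by its second derived subgroup. -/
abbrev FreeMetabelianGroup (n : ℕ) :=
  FreeGroup (Fin n) ⧸ derivedSeries (FreeGroup (Fin n)) 2

instance (n : ℕ) : (derivedSeries (FreeGroup (Fin n)) 2).Normal :=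
  derivedSeries_normal _ _

open commutatorElement

namespace FMAux

open MonoidAlgebra SemidirectProduct Multiplicative

variable (n : ℕ)

/-- The free abelian group of rank `n`, written multiplicatively. -/
abbrev W := Multiplicative (Fin n →₀ ℤ)

/-- The group ring `ℤ[ℤⁿ]`, i.e. Laurent polynomials in `n` variables over `ℤ`. -/
abbrev R := MonoidAlgebra ℤ (W n)

/-- Group elements as units of the group ring. -/
noncomputable def gU : W n →* (R n)ˣ := (MonoidAlgebra.of ℤ (W n)).toHomUnits

/-- Units of `R` act on the additive group of `R` by multiplication. -/
noncomputable def phi : (R n)ˣ →* MulAut (Multiplicative (R n)) where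
  toFun u :=
    { toFun := fun x => ofAdd (u • x.toAdd)
      invFun := fun x => ofAdd (u⁻¹ • x.toAdd)
      left_inv := fun x => by simp
      right_inv := fun x => by simp
      map_mul' := fun x y => by simp [smul_add] }
  map_one' := by ext x; simp
  map_mul' := fun u v => by ext x; simp [mul_smul]

@[simp] lemma phi_apply (u : (R n)ˣ) (x : Multiplicative (R n)) :
    phi n u x = ofAdd (u • x.toAdd) := rfl

/-- The metabelian group receiving (a quotient of) the Magnus embedding. -/
abbrev G := SemidirectProduct (Multiplicative (R n)) (R n)ˣ (phi n)

lemma G_derived_two : derivedSeries (G n) 2 = ⊥ := by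
  have h1 : derivedSeries (G n) 1 ≤ (rightHom : G n →* (R n)ˣ).ker := by
    rw [derivedSeries_one]
    exact Abelianization.commutator_subset_ker _
  have hc : (rightHom : G n →* (R n)ˣ).ker ≤
      Subgroup.centralizer ((rightHom : G n →* (R n)ˣ).ker : Set (G n)) := by
    intro a ha
    rw [Subgroup.mem_centralizer_iff]
    intro b hb
    have ha' : a.right = 1 := ha
    have hb' : b.right = 1 := hb
    ext
    · simp [mul_left, ha', hb', mul_comm]
    · simp [mul_right, ha', hb']
  have h2 : derivedSeries (G n) 2 = ⁅derivedSeries (G n) 1, derivedSeries (G n) 1⁆ :=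
    derivedSeries_succ _ 1
  rw [h2, ← le_bot_iff]
  calc ⁅derivedSeries (G n) 1, derivedSeries (G n) 1⁆
      ≤ ⁅(rightHom : G n →* (R n)ˣ).ker, (rightHom : G n →* (R n)ˣ).ker⁆ :=
        Subgroup.commutator_mono h1 h1
    _ = ⊥ := Subgroup.commutator_eq_bot_iff_le_centralizer.mpr hc

/-- The Magnus-type homomorphism on the free group: generator `i` goes to the pair
`(δ_{i,0}, tᵢ)` where `tᵢ` is the `i`-th monomial generator of the group ring. -/
noncomputable def psiF : FreeGroup (Fin n) →* G n :=
  FreeGroup.lift fun i =>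
    ⟨ofAdd (if (i : ℕ) = 0 then (1 : R n) else 0),
     gU n (ofAdd (Finsupp.single i 1))⟩

lemma dS2_le_ker_psiF : derivedSeries (FreeGroup (Fin n)) 2 ≤ (psiF n).ker := by
  intro f hf
  have h : psiF n f ∈ derivedSeries (G n) 2 :=
    map_derivedSeries_le_derivedSeries (psiF n) 2 (Subgroup.mem_map_of_mem _ hf)
  rw [G_derived_two] at h
  simpa [MonoidHom.mem_ker] using h

/-- Abelianization of the free group, concretely. -/
noncomputable def thetaF : FreeGroup (Fin n) →* W n :=
  FreeGroup.lift fun i => ofAdd (Finsupp.single i 1)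

lemma dS2_le_commutator :
    derivedSeries (FreeGroup (Fin n)) 2 ≤ commutator (FreeGroup (Fin n)) := by
  rw [derivedSeries_succ, commutator_def]
  exact Subgroup.commutator_mono le_top le_top

lemma dS2_le_ker_thetaF : derivedSeries (FreeGroup (Fin n)) 2 ≤ (thetaF n).ker :=
  (dS2_le_commutator n).trans (Abelianization.commutator_subset_ker _)

noncomputable def psi : FreeMetabelianGroup n →* G n :=
  QuotientGroup.lift _ (psiF n) (dS2_le_ker_psiF n)

noncomputable def theta : FreeMetabelianGroup n →* W n :=
  QuotientGroup.lift _ (thetaF n) (dS2_le_ker_thetaF n)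

noncomputable def back : W n →* Abelianization (FreeGroup (Fin n)) :=
  AddMonoidHom.toMultiplicativeLeft
    (Finsupp.liftAddHom fun i =>
      zmultiplesHom _ (Additive.ofMul (Abelianization.of (FreeGroup.of i))))

lemma back_comp_thetaF :
    (back n).comp (thetaF n) = Abelianization.of := by
  apply FreeGroup.ext_hom
  intro i
  simp [back, thetaF, AddMonoidHom.toMultiplicativeLeft]

lemma mem_commutator_of_theta_eq_one (x : FreeMetabelianGroup n)
    (hx : theta n x = 1) : x ∈ commutator (FreeMetabelianGroup n) := by
  obtain ⟨f, rfl⟩ := QuotientGroup.mk_surjective x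
  have h1 : thetaF n f = 1 := hx
  have h2 : Abelianization.of f = 1 := by
    have := congrArg (fun g => g f) (back_comp_thetaF n)
    simp only [MonoidHom.comp_apply] at this
    rw [← this, h1, map_one]
  have h3 : f ∈ commutator (FreeGroup (Fin n)) :=
    (QuotientGroup.eq_one_iff f).mp h2
  have h4 : commutator (FreeMetabelianGroup n) =
      (commutator (FreeGroup (Fin n))).map
        (QuotientGroup.mk' (derivedSeries (FreeGroup (Fin n)) 2)) := by
    rw [commutator_def, commutator_def, Subgroup.map_commutator,
      Subgroup.map_top_of_surjective _ (QuotientGroup.mk'_surjective _)]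
  rw [h4]
  exact Subgroup.mem_map_of_mem _ h3

lemma rightHom_psi (x : FreeMetabelianGroup n) :
    (psi n x).right = gU n (theta n x) := by
  have h : (rightHom : G n →* (R n)ˣ).comp
      ((psi n).comp (QuotientGroup.mk' (derivedSeries (FreeGroup (Fin n)) 2))) =
      ((gU n).comp (theta n)).comp
        (QuotientGroup.mk' (derivedSeries (FreeGroup (Fin n)) 2)) := by
    apply FreeGroup.ext_hom
    intro i
    show (psiF n (FreeGroup.of i)).right = gU n (thetaF n (FreeGroup.of i))
    rw [psiF, thetaF, FreeGroup.lift_apply_of, FreeGroup.lift_apply_of]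
  obtain ⟨f, rfl⟩ := QuotientGroup.mk_surjective x
  exact congrArg (fun g => g f) h

lemma M_derived_two : derivedSeries (FreeMetabelianGroup n) 2 = ⊥ := by
  rw [← map_derivedSeries_eq (QuotientGroup.mk'_surjective
    (derivedSeries (FreeGroup (Fin n)) 2)) 2, ← le_bot_iff]
  intro x hx
  obtain ⟨f, hf, rfl⟩ := hx
  exact Subgroup.mem_bot.mpr ((QuotientGroup.eq_one_iff f).mpr hf)

lemma M_comm_mem (p q : FreeMetabelianGroup n)
    (hp : p ∈ commutator (FreeMetabelianGroup n))
    (hq : q ∈ commutator (FreeMetabelianGroup n)) : p * q = q * p := by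
  have h : ⁅p, q⁆ ∈ ⁅commutator (FreeMetabelianGroup n), commutator (FreeMetabelianGroup n)⁆ :=
    Subgroup.commutator_mem_commutator hp hq
  have hb : ⁅commutator (FreeMetabelianGroup n), commutator (FreeMetabelianGroup n)⁆ =
      (⊥ : Subgroup (FreeMetabelianGroup n)) := by
    have h2 := M_derived_two n
    have h3 := ((derivedSeries_succ (FreeMetabelianGroup n) 1).symm.trans h2)
    have h4 := derivedSeries_one (FreeMetabelianGroup n)
    rw [← h4]
    exact h3
  rw [hb] at h
  have := commutatorElement_eq_one_iff_commute.mp (Subgroup.mem_bot.mp h)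
  exact this.eq


lemma key_right (u v : (R n)ˣ) :
    ((⟨ofAdd (1 : R n), u⟩ : G n)⁻¹ * (⟨ofAdd (0 : R n), v⟩ : G n)⁻¹ *
      ⟨ofAdd (1 : R n), u⟩ * ⟨ofAdd (0 : R n), v⟩).right = 1 := by
  simp only [mul_right, inv_right]
  rw [mul_assoc (u⁻¹ * v⁻¹), mul_mul_mul_comm, inv_mul_cancel, inv_mul_cancel, one_mul]

lemma key_left (u v : (R n)ˣ) :
    toAdd ((⟨ofAdd (1 : R n), u⟩ : G n)⁻¹ * (⟨ofAdd (0 : R n), v⟩ : G n)⁻¹ *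
      ⟨ofAdd (1 : R n), u⟩ * ⟨ofAdd (0 : R n), v⟩).left
      = ((u⁻¹ : (R n)ˣ) : R n) * ((v⁻¹ : (R n)ˣ) : R n) - ((u⁻¹ : (R n)ˣ) : R n) := by
  simp [mul_left, inv_left, inv_right, mul_right, phi_apply, Units.smul_def,
    toAdd_mul, toAdd_inv, smul_add, ← map_inv, Units.val_mul]
  ring

lemma forward (hn : 2 ≤ n) (x : FreeMetabelianGroup n)
    (hx : ∀ y z : FreeMetabelianGroup n,
      x * (y⁻¹ * z⁻¹ * y * z) = (y⁻¹ * z⁻¹ * y * z) * x) :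
    x ∈ commutator (FreeMetabelianGroup n) := by
  by_contra hmem
  obtain ⟨i0, hi0⟩ : ∃ i : Fin n, (i : ℕ) = 0 := ⟨⟨0, by omega⟩, rfl⟩
  obtain ⟨i1, hi1⟩ : ∃ i : Fin n, (i : ℕ) = 1 := ⟨⟨1, by omega⟩, rfl⟩
  obtain ⟨u0, hu0⟩ : ∃ u : (R n)ˣ, u = gU n (ofAdd (Finsupp.single i0 1)) := ⟨_, rfl⟩
  obtain ⟨u1, hu1⟩ : ∃ u : (R n)ˣ, u = gU n (ofAdd (Finsupp.single i1 1)) := ⟨_, rfl⟩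
  have hpa : psi n (QuotientGroup.mk (FreeGroup.of i0) : FreeMetabelianGroup n)
      = ⟨ofAdd (1 : R n), u0⟩ := by
    show psiF n (FreeGroup.of i0) = _
    rw [psiF, FreeGroup.lift_apply_of, hu0]
    congr 1
    rw [if_pos hi0]
  have hpb : psi n (QuotientGroup.mk (FreeGroup.of i1) : FreeMetabelianGroup n)
      = ⟨ofAdd (0 : R n), u1⟩ := by
    show psiF n (FreeGroup.of i1) = _
    rw [psiF, FreeGroup.lift_apply_of, hu1]
    congr 1
    rw [if_neg (by omega)]
  obtain ⟨K, hK⟩ : ∃ K : G n, K = (⟨ofAdd (1 : R n), u0⟩ : G n)⁻¹ *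
      (⟨ofAdd (0 : R n), u1⟩ : G n)⁻¹ * ⟨ofAdd (1 : R n), u0⟩ * ⟨ofAdd (0 : R n), u1⟩ :=
    ⟨_, rfl⟩
  have hcomm : psi n x * K = K * psi n x := by
    have h0 := congrArg (psi n)
      (hx (QuotientGroup.mk (FreeGroup.of i0)) (QuotientGroup.mk (FreeGroup.of i1)))
    simp only [map_mul, map_inv, hpa, hpb] at h0
    rw [hK]
    exact h0
  have hKright : K.right = 1 := by rw [hK]; exact key_right n u0 u1
  obtain ⟨c, hc⟩ : ∃ c : R n, c = toAdd K.left := ⟨_, rfl⟩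
  have hcval : c = ((u0⁻¹ : (R n)ˣ) : R n) * ((u1⁻¹ : (R n)ˣ) : R n) -
      ((u0⁻¹ : (R n)ˣ) : R n) := by
    rw [hc, hK]; exact key_left n u0 u1
  obtain ⟨w, hw⟩ : ∃ w : (R n)ˣ, w = (psi n x).right := ⟨_, rfl⟩
  have hleft : (psi n x).left * phi n w K.left = K.left * (psi n x).left := by
    have h1 := congrArg SemidirectProduct.left hcomm
    rw [mul_left, mul_left, hKright, map_one, MulAut.one_apply, ← hw] at h1
    exact h1
  have hfix : phi n w K.left = K.left :=
    mul_left_cancel (hleft.trans (mul_comm K.left (psi n x).left))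
  have hwc : (w : R n) * c = c := by
    have h2 := congrArg toAdd hfix
    rw [phi_apply, toAdd_ofAdd, Units.smul_def, ← hc] at h2
    exact h2
  have htheta : theta n x ≠ 1 := fun h => hmem (mem_commutator_of_theta_eq_one n x h)
  have hwval : (w : R n) ≠ 1 := by
    rw [hw, rightHom_psi]
    intro h
    exact htheta (MonoidAlgebra.of_injective (h.trans (map_one _).symm))
  have hu1val : ((u1⁻¹ : (R n)ˣ) : R n) ≠ 1 := by
    rw [hu1, ← map_inv]
    intro h
    have h2 : (ofAdd (Finsupp.single i1 (1 : ℤ)))⁻¹ = 1 :=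
      MonoidAlgebra.of_injective (h.trans (map_one _).symm)
    have h3 : Finsupp.single i1 (1 : ℤ) = 0 := by
      have := congrArg toAdd (inv_eq_one.mp h2)
      simpa using this
    exact one_ne_zero (Finsupp.single_eq_zero.mp h3)
  have hcne : c ≠ 0 := by
    rw [hcval, ← mul_sub_one]
    intro h
    rcases mul_eq_zero.mp h with h' | h'
    · exact Units.ne_zero _ h'
    · exact hu1val (sub_eq_zero.mp h')
  have hzero : ((w : R n) - 1) * c = 0 := by
    rw [sub_mul, one_mul, hwc, sub_self]
  rcases mul_eq_zero.mp hzero with h' | h'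
  · exact hwval (sub_eq_zero.mp h')
  · exact hcne h'


end FMAux


/-- In the free metabelian group `M` of rank `n ≥ 2`, an element `x` commutes with all
commutators `[y, z] = y⁻¹z⁻¹yz` if and only if `x ∈ M'`; equivalently, the centralizer of
the commutator subgroup `M'` in `M` is exactly `M'`. -/
theorem free_metabelian_centralizer_of_commutator_subgroup (n : ℕ) (hn : 2 ≤ n) :
    (∀ x : FreeMetabelianGroup n,
      (∀ y z : FreeMetabelianGroup n,
        x * (y⁻¹ * z⁻¹ * y * z) = (y⁻¹ * z⁻¹ * y * z) * x) ↔
      x ∈ commutator (FreeMetabelianGroup n)) ∧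
    Subgroup.centralizer
        ((commutator (FreeMetabelianGroup n) : Subgroup (FreeMetabelianGroup n)) :
          Set (FreeMetabelianGroup n)) =
      commutator (FreeMetabelianGroup n) := by
  have hkmem : ∀ y z : FreeMetabelianGroup n,
      y⁻¹ * z⁻¹ * y * z ∈ commutator (FreeMetabelianGroup n) := by
    intro y z
    have h : ⁅y⁻¹, z⁻¹⁆ ∈ commutator (FreeMetabelianGroup n) := by
      rw [commutator_def]
      exact Subgroup.commutator_mem_commutator (Subgroup.mem_top _) (Subgroup.mem_top _)
    simpa [commutatorElement_def, mul_assoc] using h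
  have main : ∀ x : FreeMetabelianGroup n,
      (∀ y z : FreeMetabelianGroup n,
        x * (y⁻¹ * z⁻¹ * y * z) = (y⁻¹ * z⁻¹ * y * z) * x) ↔
      x ∈ commutator (FreeMetabelianGroup n) := fun x =>
    ⟨FMAux.forward n hn x, fun hx y z => FMAux.M_comm_mem n x _ hx (hkmem y z)⟩
  refine ⟨main, ?_⟩
  ext x
  rw [Subgroup.mem_centralizer_iff]
  constructor
  · intro hx
    exact (main x).mp fun y z => (hx _ (hkmem y z)).symm
  · intro hx g hg
    exact FMAux.M_comm_mem n g x hg hx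
end

section
/- Let n ≥ 2, let M be the free metabelian group of rank n, and let (a₁, …, aₙ) be the canonical basis of M (the images of the free generators). Suppose b₁, …, bₙ ∈ M generate M, and suppose that for every group word w in n letters one has w(a₁, …, aₙ) = 1 in M if and only if w(b₁, …, bₙ) = 1 in M. Then the assignment aᵢ ↦ bᵢ extends to an automorphism of M; in particular (b₁, …, bₙ) is a basis of M. -/
/-- The canonical basis of the free metabelian group: the images of the free generators. -/
def FreeMetabelianGroup.gen (n : ℕ) (i : Fin n) : FreeMetabelianGroup n :=
  QuotientGroup.mk (FreeGroup.of i)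

lemma lift_gen_eq (n : ℕ) (w : FreeGroup (Fin n)) :
    FreeGroup.lift (FreeMetabelianGroup.gen n) w =
      QuotientGroup.mk' (derivedSeries (FreeGroup (Fin n)) 2) w := by
  have : (FreeGroup.lift (FreeMetabelianGroup.gen n) : FreeGroup (Fin n) →* _) =
      QuotientGroup.mk' (derivedSeries (FreeGroup (Fin n)) 2) := by
    apply FreeGroup.ext_hom
    intro i
    simp only [FreeGroup.lift_apply_of, FreeMetabelianGroup.gen, QuotientGroup.mk'_apply]
  rw [this]

/-- Let `M` be the free metabelian group of rank `n ≥ 2` with canonical basis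
`(a₁, …, aₙ)`.  If `b₁, …, bₙ` generate `M` and for every group word `w` in `n` letters
one has `w(a₁, …, aₙ) = 1 ↔ w(b₁, …, bₙ) = 1`, then `aᵢ ↦ bᵢ` extends to an
automorphism of `M`. -/
theorem free_metabelian_basis_criterion (n : ℕ) (hn : 2 ≤ n)
    (b : Fin n → FreeMetabelianGroup n)
    (hgen : Subgroup.closure (Set.range b) = ⊤)
    (hwp : ∀ w : FreeGroup (Fin n),
      FreeGroup.lift (FreeMetabelianGroup.gen n) w = 1 ↔ FreeGroup.lift b w = 1) :
    ∃ φ : FreeMetabelianGroup n ≃* FreeMetabelianGroup n,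
      ∀ i : Fin n, φ (FreeMetabelianGroup.gen n i) = b i := by
  set N := derivedSeries (FreeGroup (Fin n)) 2
  -- the word map `lift b` kills N
  have hker : ∀ w ∈ N, FreeGroup.lift b w = 1 := by
    intro w hw
    rw [← hwp w, lift_gen_eq]
    exact (QuotientGroup.eq_one_iff w).mpr hw
  -- descend to ψ : M →* M
  let ψ : FreeMetabelianGroup n →* FreeMetabelianGroup n :=
    QuotientGroup.lift N (FreeGroup.lift b) hker
  have hψ : ∀ i, ψ (FreeMetabelianGroup.gen n i) = b i := by
    intro i
    simp [ψ, FreeMetabelianGroup.gen]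
    exact (by simp : FreeGroup.lift b (FreeGroup.of i) = b i)
  have hinj : Function.Injective ψ := by
    rw [injective_iff_map_eq_one]
    intro x hx
    obtain ⟨w, rfl⟩ := QuotientGroup.mk'_surjective N x
    have h1 : FreeGroup.lift b w = 1 := by exact hx
    have h2 : FreeGroup.lift (FreeMetabelianGroup.gen n) w = 1 := (hwp w).2 h1
    rw [lift_gen_eq] at h2
    exact h2
  have hsurj : Function.Surjective ψ := by
    rw [← MonoidHom.range_eq_top]
    rw [← top_le_iff, ← hgen, Subgroup.closure_le]
    rintro _ ⟨i, rfl⟩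
    exact ⟨FreeMetabelianGroup.gen n i, hψ i⟩
  exact ⟨MulEquiv.ofBijective ψ ⟨hinj, hsurj⟩, hψ⟩
end

section
/- Let G be a group whose commutator subgroup G' = [G, G] is abelian, let x₁, …, xₘ ∈ G, and let α₁, …, αₘ be integers. Then the set S = { ∏_{i=1}^{m} (xᵢ⁻¹ gᵢ xᵢ) · gᵢ^{−αᵢ} : g₁, …, gₘ ∈ G' } is equal to the subgroup of G generated by the set { (xᵢ⁻¹ g xᵢ) · g^{−αᵢ} : g ∈ G', 1 ≤ i ≤ m }; in particular S is a subgroup of G contained in G'. -/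
section
variable {G : Type*} [Group G]

lemma aux_mem_comm (x g : G) (a : ℤ) (hg : g ∈ commutator G) :
    (x⁻¹ * g * x) * g ^ (-a) ∈ commutator G := by
  have h2 : x⁻¹ * g * x = x⁻¹ * g * (x⁻¹)⁻¹ := by simp
  exact mul_mem (h2 ▸ (Subgroup.commutator_normal ⊤ ⊤).conj_mem g hg x⁻¹)
    (zpow_mem hg _)

lemma aux_prod_mem (n : ℕ) (a : Fin n → G) (ha : ∀ i, a i ∈ commutator G) :
    (List.ofFn a).prod ∈ commutator G := by
  apply list_prod_mem
  intro y hy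
  obtain ⟨i, rfl⟩ := List.mem_ofFn.mp hy
  exact ha i

lemma aux_prod_mul (hab : ∀ x ∈ commutator G, ∀ y ∈ commutator G, x * y = y * x) :
    ∀ (n : ℕ) (a b : Fin n → G), (∀ i, a i ∈ commutator G) → (∀ i, b i ∈ commutator G) →
    (List.ofFn a).prod * (List.ofFn b).prod = (List.ofFn (fun i => a i * b i)).prod := by
  intro n
  induction n with
  | zero => simp
  | succ n ih =>
    intro a b ha hb
    rw [List.ofFn_succ, List.ofFn_succ, List.ofFn_succ]
    simp only [List.prod_cons, Function.comp]
    have hPa : (List.ofFn (fun i => a i.succ)).prod ∈ commutator G :=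
      aux_prod_mem _ _ (fun i => ha i.succ)
    calc a 0 * (List.ofFn fun i => a i.succ).prod * (b 0 * (List.ofFn fun i => b i.succ).prod)
        = a 0 * (((List.ofFn fun i => a i.succ).prod * b 0) * (List.ofFn fun i => b i.succ).prod) := by
          group
      _ = a 0 * ((b 0 * (List.ofFn fun i => a i.succ).prod) * (List.ofFn fun i => b i.succ).prod) := by
          rw [hab _ hPa _ (hb 0)]
      _ = (a 0 * b 0) * ((List.ofFn fun i => a i.succ).prod * (List.ofFn fun i => b i.succ).prod) := by
          group
      _ = (a 0 * b 0) * (List.ofFn fun i => a i.succ * b i.succ).prod := by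
          rw [ih _ _ (fun i => ha i.succ) (fun i => hb i.succ)]

lemma aux_prod_inv (hab : ∀ x ∈ commutator G, ∀ y ∈ commutator G, x * y = y * x) :
    ∀ (n : ℕ) (a : Fin n → G), (∀ i, a i ∈ commutator G) →
    ((List.ofFn a).prod)⁻¹ = (List.ofFn (fun i => (a i)⁻¹)).prod := by
  intro n
  induction n with
  | zero => simp
  | succ n ih =>
    intro a ha
    rw [List.ofFn_succ, List.ofFn_succ]
    simp only [List.prod_cons]
    rw [mul_inv_rev, ih _ (fun i => ha i.succ)]
    have hP : (List.ofFn (fun i => (a i.succ)⁻¹)).prod ∈ commutator G :=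
      aux_prod_mem _ _ (fun i => inv_mem (ha i.succ))
    exact hab _ hP _ (inv_mem (ha 0))

lemma aux_hom (hab : ∀ x ∈ commutator G, ∀ y ∈ commutator G, x * y = y * x)
    (x g h : G) (a : ℤ) (hg : g ∈ commutator G) (hh : h ∈ commutator G) :
    (x⁻¹ * (g * h) * x) * (g * h) ^ (-a)
      = ((x⁻¹ * g * x) * g ^ (-a)) * ((x⁻¹ * h * x) * h ^ (-a)) := by
  have hcomm : Commute g h := hab g hg h hh
  have h1 : (g * h) ^ (-a) = g ^ (-a) * h ^ (-a) := hcomm.mul_zpow _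
  have h2 : x⁻¹ * h * x = x⁻¹ * h * (x⁻¹)⁻¹ := by simp
  have h3 : (x⁻¹ * h * x) * g ^ (-a) = g ^ (-a) * (x⁻¹ * h * x) :=
    hab _ (h2 ▸ (Subgroup.commutator_normal ⊤ ⊤).conj_mem h hh x⁻¹) _ (zpow_mem hg _)
  calc (x⁻¹ * (g * h) * x) * (g * h) ^ (-a)
      = (x⁻¹ * g * x) * ((x⁻¹ * h * x) * g ^ (-a)) * h ^ (-a) := by rw [h1]; group
    _ = (x⁻¹ * g * x) * (g ^ (-a) * (x⁻¹ * h * x)) * h ^ (-a) := by rw [h3]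
    _ = _ := by group

lemma aux_inv (hab : ∀ x ∈ commutator G, ∀ y ∈ commutator G, x * y = y * x)
    (x g : G) (a : ℤ) (hg : g ∈ commutator G) :
    (x⁻¹ * g⁻¹ * x) * (g⁻¹) ^ (-a) = (((x⁻¹ * g * x) * g ^ (-a)))⁻¹ := by
  have := aux_hom hab x g g⁻¹ a hg (inv_mem hg)
  simp only [mul_inv_cancel] at this
  have h1 : (1:G) = ((x⁻¹ * g * x) * g ^ (-a)) * ((x⁻¹ * g⁻¹ * x) * (g⁻¹) ^ (-a)) := by
    rw [← this]; simp
  exact (eq_inv_of_mul_eq_one_right h1.symm).symm ▸ rfl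

lemma aux_single : ∀ (n : ℕ) (f : Fin n → G) (i : Fin n), (∀ j, j ≠ i → f j = 1) →
    (List.ofFn f).prod = f i := by
  intro n
  induction n with
  | zero => exact fun f i => i.elim0
  | succ n ih =>
    intro f i h
    rw [List.ofFn_succ, List.prod_cons]
    rcases Fin.eq_zero_or_eq_succ i with rfl | ⟨k, rfl⟩
    · have : ∀ j : Fin n, f j.succ = 1 := fun j => h j.succ (Fin.succ_ne_zero j)
      rw [List.prod_eq_one, mul_one]
      intro y hy
      obtain ⟨j, rfl⟩ := List.mem_ofFn.mp hy
      exact this j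
    · rw [h 0 (Ne.symm (Fin.succ_ne_zero k)), one_mul,
        ih _ k (fun j hj => h j.succ (fun e => hj (Fin.succ_injective _ e)))]

end

/-- Let `G` be a metabelian group (the commutator subgroup `G' = [G,G]` is abelian),
`x₁, …, xₘ ∈ G` and `α₁, …, αₘ ∈ ℤ`.  Then the set
`S = { ∏ᵢ (xᵢ⁻¹ gᵢ xᵢ) · gᵢ^(−αᵢ) : gᵢ ∈ G' }` is the subgroup of `G` generated by
`{ (xᵢ⁻¹ g xᵢ) · g^(−αᵢ) : g ∈ G', 1 ≤ i ≤ m }`; in particular `S` is a subgroup of `G`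
contained in `G'`. -/
theorem metabelian_ideal_action_subgroup (G : Type*) [Group G]
    (hab : ∀ x ∈ commutator G, ∀ y ∈ commutator G, x * y = y * x)
    (m : ℕ) (x : Fin m → G) (α : Fin m → ℤ) :
    {u : G | ∃ g : Fin m → G, (∀ i, g i ∈ commutator G) ∧
        u = (List.ofFn (fun i : Fin m =>
          ((x i)⁻¹ * g i * x i) * (g i) ^ (-(α i)))).prod} =
      (Subgroup.closure {u : G | ∃ i : Fin m, ∃ g ∈ commutator G,
        u = ((x i)⁻¹ * g * x i) * g ^ (-(α i))} : Set G) ∧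
    {u : G | ∃ g : Fin m → G, (∀ i, g i ∈ commutator G) ∧
        u = (List.ofFn (fun i : Fin m =>
          ((x i)⁻¹ * g i * x i) * (g i) ^ (-(α i)))).prod} ⊆
      (commutator G : Set G) := by
  constructor
  · apply Set.Subset.antisymm
    · rintro u ⟨g, hg, rfl⟩
      apply Subgroup.list_prod_mem
      intro y hy
      obtain ⟨i, rfl⟩ := List.mem_ofFn.mp hy
      exact Subgroup.subset_closure ⟨i, g i, hg i, rfl⟩
    · intro u hu
      induction hu using Subgroup.closure_induction with
      | mem y hy =>
        obtain ⟨i, g, hg, rfl⟩ := hy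
        refine ⟨fun j => if j = i then g else 1, fun j => ?_, ?_⟩
        · by_cases h : j = i <;> simp [h, hg, Subgroup.one_mem]
        · rw [aux_single m _ i (fun j hj => by simp [hj])]
          simp
      | one => exact ⟨fun _ => 1, fun _ => Subgroup.one_mem _, by simp⟩
      | mul a b _ _ ha hb =>
        obtain ⟨g, hg, rfl⟩ := ha
        obtain ⟨h, hh, rfl⟩ := hb
        refine ⟨fun i => g i * h i, fun i => mul_mem (hg i) (hh i), ?_⟩
        show _ = (List.ofFn fun i : Fin m =>
          ((x i)⁻¹ * (g i * h i) * x i) * (g i * h i) ^ (-(α i))).prod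
        rw [show (fun i : Fin m => ((x i)⁻¹ * (g i * h i) * x i) * (g i * h i) ^ (-(α i)))
            = fun i : Fin m => (((x i)⁻¹ * g i * x i) * (g i) ^ (-(α i))) *
              (((x i)⁻¹ * h i * x i) * (h i) ^ (-(α i)))
          from funext fun i => aux_hom hab _ _ _ _ (hg i) (hh i)]
        exact aux_prod_mul hab _ _ _ (fun i => aux_mem_comm _ _ _ (hg i))
          (fun i => aux_mem_comm _ _ _ (hh i))
      | inv a _ ha =>
        obtain ⟨g, hg, rfl⟩ := ha
        refine ⟨fun i => (g i)⁻¹, fun i => inv_mem (hg i), ?_⟩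
        show _ = (List.ofFn fun i : Fin m =>
          ((x i)⁻¹ * (g i)⁻¹ * x i) * ((g i)⁻¹) ^ (-(α i))).prod
        rw [show (fun i : Fin m => ((x i)⁻¹ * (g i)⁻¹ * x i) * ((g i)⁻¹) ^ (-(α i)))
            = fun i : Fin m => (((x i)⁻¹ * g i * x i) * (g i) ^ (-(α i)))⁻¹
          from funext fun i => aux_inv hab _ _ _ (hg i)]
        exact aux_prod_inv hab _ _ (fun i => aux_mem_comm _ _ _ (hg i))
  · rintro u ⟨g, hg, rfl⟩
    exact aux_prod_mem _ _ (fun i => aux_mem_comm _ _ _ (hg i))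
end
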